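/- For all ν > 0, γ₀ > 0, γ₁ ∈ (0,1), γ₂ > 0, and t > 0, define ỹ(t) = √( ((4νt+γ₀²γ₁²)·γ₀²γ₁²/(4νt)) · ln( (4νt+γ₀²γ₁²)^{3/2}/(γ₀³γ₁³) ) ). Then h₁(t,·) is even in y, h₁(t,0) < 0, h₁(t,y) < 0 for all 0 ≤ y < ỹ(t), h₁(t,ỹ(t)) = 0, and h₁(t,y) > 0 for all y > ỹ(t); i.e. ỹ(t) is the unique zero of h₁(t,·) on [0,∞). -/

import Mathlib

open MeasureTheory Real Filter Set

noncomputable section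

/-- The function `h₁(t,y) = γ₂·γ₁³·(4νt+γ₀²γ₁²)^{−3/2}·exp(−y²/(4νt+γ₀²γ₁²))
  − γ₂·γ₀^{−3}·exp(−y²/(γ₀²γ₁²))` from the proof of Proposition 2.4. -/
def h1fun (ν γ₀ γ₁ γ₂ : ℝ) (t y : ℝ) : ℝ :=
  γ₂ * γ₁^3 / (Real.sqrt (4*ν*t + γ₀^2*γ₁^2))^3 * Real.exp (-y^2 / (4*ν*t + γ₀^2*γ₁^2))
    - γ₂ / γ₀^3 * Real.exp (-y^2 / (γ₀^2*γ₁^2))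

/-- The unique positive zero `ỹ(t)` of `h₁(t,·)` (for `t > 0`). -/
def ytil (ν γ₀ γ₁ : ℝ) (t : ℝ) : ℝ :=
  Real.sqrt ((4*ν*t + γ₀^2*γ₁^2) * γ₀^2 * γ₁^2 / (4*ν*t)
    * Real.log ((Real.sqrt (4*ν*t + γ₀^2*γ₁^2))^3 / (γ₀^3 * γ₁^3)))

/-!
Both terms of `h₁(t,y)` are positive Gaussians in `y`, and the narrower one,
`exp(-y²/(γ₀²γ₁²))`, has the larger peak since `γ₀γ₁ < √(4νt + γ₀²γ₁²)`. Their ratio is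
`exp(k (y² - ỹ²))` with `k = 1/(γ₀²γ₁²) - 1/(4νt + γ₀²γ₁²) > 0`, so the sign of `h₁(t,y)` is
that of `y² - ỹ²`.
-/

/-- The value of `s` at which `p * exp (-s / b) = q * exp (-s / a)`. -/
def gaussCrossingSq (a b p q : ℝ) : ℝ := a * b / (b - a) * log (q / p)

section
variable {a b p q : ℝ}

theorem mul_exp_sub_mul_exp_eq (ha : 0 < a) (hab : a < b) (hp : 0 < p) (hq : 0 < q) (s : ℝ) :
    p * exp (-s / b) - q * exp (-s / a) =
      q * exp (-s / a) * (exp ((b - a) / (a * b) * (s - gaussCrossingSq a b p q)) - 1) := by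
  have hexponent : (b - a) / (a * b) * (s - gaussCrossingSq a b p q) =
      -s / b - -s / a - log (q / p) := by
    unfold gaussCrossingSq
    field_simp [(sub_pos.2 hab).ne', (ha.trans hab).ne']
    ring
  rw [hexponent, exp_sub, exp_sub, exp_log (div_pos hq hp)]
  field_simp

theorem mul_exp_sub_mul_exp_neg_iff (ha : 0 < a) (hab : a < b) (hp : 0 < p) (hq : 0 < q)
    {s : ℝ} : p * exp (-s / b) - q * exp (-s / a) < 0 ↔ s < gaussCrossingSq a b p q := by
  have hk : 0 < (b - a) / (a * b) := div_pos (sub_pos.2 hab) (mul_pos ha (ha.trans hab))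
  rw [mul_exp_sub_mul_exp_eq ha hab hp hq, ← not_le, mul_nonneg_iff_of_pos_left (by positivity),
    sub_nonneg, one_le_exp_iff, mul_nonneg_iff_of_pos_left hk, sub_nonneg, not_le]

theorem mul_exp_sub_mul_exp_eq_zero_iff (ha : 0 < a) (hab : a < b) (hp : 0 < p) (hq : 0 < q)
    {s : ℝ} : p * exp (-s / b) - q * exp (-s / a) = 0 ↔ s = gaussCrossingSq a b p q := by
  have hk : 0 < (b - a) / (a * b) := div_pos (sub_pos.2 hab) (mul_pos ha (ha.trans hab))
  rw [mul_exp_sub_mul_exp_eq ha hab hp hq, mul_eq_zero_iff_left (by positivity), sub_eq_zero,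
    exp_eq_one_iff, mul_eq_zero_iff_left hk.ne', sub_eq_zero]

theorem mul_exp_sub_mul_exp_pos_iff (ha : 0 < a) (hab : a < b) (hp : 0 < p) (hq : 0 < q)
    {s : ℝ} : 0 < p * exp (-s / b) - q * exp (-s / a) ↔ gaussCrossingSq a b p q < s := by
  have hk : 0 < (b - a) / (a * b) := div_pos (sub_pos.2 hab) (mul_pos ha (ha.trans hab))
  rw [mul_exp_sub_mul_exp_eq ha hab hp hq, mul_pos_iff_of_pos_left (by positivity), sub_pos,
    one_lt_exp_iff, mul_pos_iff_of_pos_left hk, sub_pos]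

theorem gaussCrossingSq_pos (ha : 0 < a) (hab : a < b) (hp : 0 < p) (hpq : p < q) :
    0 < gaussCrossingSq a b p q :=
  mul_pos (div_pos (mul_pos ha (ha.trans hab)) (sub_pos.2 hab)) (log_pos ((one_lt_div hp).2 hpq))

end

theorem ytil_eq_sqrt_gaussCrossingSq (ν γ₀ γ₁ γ₂ t : ℝ) (hγ₂ : γ₂ ≠ 0) :
    ytil ν γ₀ γ₁ t = √(gaussCrossingSq (γ₀^2*γ₁^2) (4*ν*t + γ₀^2*γ₁^2)
      (γ₂ * γ₁^3 / √(4*ν*t + γ₀^2*γ₁^2)^3) (γ₂ / γ₀^3)) := by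
  unfold ytil gaussCrossingSq
  rw [add_sub_cancel_right, div_div_div_eq, mul_left_comm (γ₀^3), mul_div_mul_left _ _ hγ₂]
  congr 2
  ring

/-- sign analysis of `h₁` and its unique positive zero, proof of
Proposition 2.4. For `t > 0`: `h₁(t,·)` is even, negative at `0` and on `[0,ỹ(t))`,
vanishes at `ỹ(t)`, and is positive on `(ỹ(t),∞)`. -/
theorem h1_sign_and_unique_zero (ν γ₀ γ₁ γ₂ t : ℝ) (hν : 0 < ν) (hγ₀ : 0 < γ₀)
    (hγ₁ : γ₁ ∈ Set.Ioo (0:ℝ) 1) (hγ₂ : 0 < γ₂) (ht : 0 < t) :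
    (∀ y : ℝ, h1fun ν γ₀ γ₁ γ₂ t (-y) = h1fun ν γ₀ γ₁ γ₂ t y) ∧
    h1fun ν γ₀ γ₁ γ₂ t 0 < 0 ∧
    (∀ y : ℝ, 0 ≤ y → y < ytil ν γ₀ γ₁ t → h1fun ν γ₀ γ₁ γ₂ t y < 0) ∧
    h1fun ν γ₀ γ₁ γ₂ t (ytil ν γ₀ γ₁ t) = 0 ∧
    (∀ y : ℝ, ytil ν γ₀ γ₁ t < y → 0 < h1fun ν γ₀ γ₁ γ₂ t y) := by
  have hγ₁ : 0 < γ₁ := hγ₁.1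
  have ha : 0 < γ₀^2*γ₁^2 := by positivity
  have hab : γ₀^2*γ₁^2 < 4*ν*t + γ₀^2*γ₁^2 := lt_add_of_pos_left _ (by positivity)
  have hp : 0 < γ₂ * γ₁^3 / √(4*ν*t + γ₀^2*γ₁^2)^3 := by positivity
  have hq : 0 < γ₂ / γ₀^3 := by positivity
  have hpq : γ₂ * γ₁^3 / √(4*ν*t + γ₀^2*γ₁^2)^3 < γ₂ / γ₀^3 := by
    have hpeak : (γ₀ * γ₁)^3 < √(4*ν*t + γ₀^2*γ₁^2)^3 :=
      pow_lt_pow_left₀ ((lt_sqrt (by positivity)).2 (by linarith)) (by positivity) three_ne_zero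
    rw [div_lt_div_iff₀ (by positivity) (by positivity)]
    nlinarith
  have hc := gaussCrossingSq_pos ha hab hp hpq
  have hytil := ytil_eq_sqrt_gaussCrossingSq ν γ₀ γ₁ γ₂ t hγ₂.ne'
  have hytil_sq : ytil ν γ₀ γ₁ t ^ 2 = _ := hytil ▸ sq_sqrt hc.le
  refine ⟨fun y => by simp only [h1fun, even_two.neg_pow], ?_, ?_, ?_, ?_⟩
  · exact (mul_exp_sub_mul_exp_neg_iff ha hab hp hq).2 (by simpa using hc)
  · intro y hy₀ hy
    exact (mul_exp_sub_mul_exp_neg_iff ha hab hp hq).2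
      (hytil_sq ▸ pow_lt_pow_left₀ hy hy₀ two_ne_zero)
  · exact (mul_exp_sub_mul_exp_eq_zero_iff ha hab hp hq).2 hytil_sq
  · intro y hy
    exact (mul_exp_sub_mul_exp_pos_iff ha hab hp hq).2
      (hytil_sq ▸ pow_lt_pow_left₀ hy (hytil ▸ sqrt_nonneg _) two_ne_zero)
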